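/- Let $\kappa \in (0,1)$, $\varepsilon > 0$, $t_1 \geq 1$ an integer. Define $c_p = \min(((1+\kappa)/(2\kappa))^p, p^{(1+\varepsilon)/2})$ for $p \geq 1$, and define the schedule $t_0 = 0$, $t_p = t_{p-1} + \max(\lceil (\kappa^{-2}-1) t_{p-1} \rceil, t_1)$. Then there exists a constant $C > 0$ such that for all $p \geq 2$, $c_p \kappa^p \leq C \, (\log t_p)^{(1+\varepsilon)/2} \, t_p^{-1/2}$. -/

import Mathlib

/-!
With `K = κ⁻²`, each step of the schedule multiplies `t` by at least `K` and by at most `K` plus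
an additive constant, so `K ^ (p - 1) ≤ t p ≤ D * K ^ p`. The upper bound gives
`κ ^ p ≤ √D * (t p) ^ (-1/2)`; the lower bound gives `p ≤ (2 / log K) * log (t p)`, which controls
the factor `c p ≤ p ^ ((1 + ε) / 2)`.
-/

open Real

lemma mul_le_add_max_ceil_toNat {K : ℝ} (a m : ℕ) :
    K * a ≤ ((a + max ⌈(K - 1) * a⌉.toNat m : ℕ) : ℝ) := by
  have hceil : (K - 1) * a ≤ (⌈(K - 1) * a⌉.toNat : ℝ) := by
    rw [Int.ceil_toNat]; exact Nat.le_ceil _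
  have hmax : (⌈(K - 1) * a⌉.toNat : ℝ) ≤ (max ⌈(K - 1) * a⌉.toNat m : ℕ) := by
    exact_mod_cast le_max_left _ _
  push_cast at hmax ⊢
  linarith

lemma add_max_ceil_toNat_le {K : ℝ} (hK : 1 ≤ K) (a m : ℕ) :
    ((a + max ⌈(K - 1) * a⌉.toNat m : ℕ) : ℝ) ≤ K * a + (1 + m) := by
  have hceil : (⌈(K - 1) * a⌉.toNat : ℝ) < (K - 1) * a + 1 := by
    rw [Int.ceil_toNat]; exact Nat.ceil_lt_add_one (mul_nonneg (sub_nonneg.mpr hK) a.cast_nonneg)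
  have hmax : ((max ⌈(K - 1) * a⌉.toNat m : ℕ) : ℝ) ≤ ⌈(K - 1) * a⌉.toNat + m := by
    exact_mod_cast max_le (Nat.le_add_right _ _) (Nat.le_add_left _ _)
  push_cast at hmax ⊢
  linarith

/-- Shifting by the fixed point `b / (K - 1)` of `x ↦ K * x + b` turns the affine recursion into a
geometric one. -/
lemma add_div_le_geom_of_le_mul_add {u : ℕ → ℝ} {K b : ℝ} (hK : 1 < K)
    (h : ∀ n, u (n + 1) ≤ K * u n + b) (n : ℕ) :
    u n + b / (K - 1) ≤ K ^ n * (u 0 + b / (K - 1)) := by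
  have hfix : K * (b / (K - 1)) = b / (K - 1) + b := by
    field_simp [(sub_pos.mpr hK).ne']; ring
  refine le_geom (u := fun n ↦ u n + b / (K - 1)) (by linarith) n fun k _ ↦ ?_
  linarith [h k]

lemma natCast_rpow_le_mul_log_rpow {K x α : ℝ} {p : ℕ} (hK : 1 < K) (hα : 0 ≤ α) (hp : 2 ≤ p)
    (hx : K ^ (p - 1) ≤ x) :
    (p : ℝ) ^ α ≤ (2 / log K) ^ α * log x ^ α := by
  have hlogK : 0 < log K := log_pos hK
  have hlog : ((p - 1 : ℕ) : ℝ) * log K ≤ log x := by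
    rw [← log_pow]; exact log_le_log (by positivity) hx
  have hpx : (p : ℝ) ≤ 2 / log K * log x := by
    rw [div_mul_eq_mul_div, le_div_iff₀ hlogK]
    have : (2 : ℝ) ≤ p := by exact_mod_cast hp
    push_cast [Nat.cast_sub (by omega : 1 ≤ p)] at hlog
    nlinarith
  rw [← mul_rpow (by positivity) (by nlinarith)]
  exact rpow_le_rpow (Nat.cast_nonneg p) hpx hα

lemma pow_le_sqrt_mul_rpow_neg_half {κ x D : ℝ} (hκ : 0 < κ) (hx : 0 < x) (p : ℕ)
    (hup : x ≤ D * (κ ^ 2)⁻¹ ^ p) :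
    κ ^ p ≤ √D * x ^ (-(1 : ℝ) / 2) := by
  have hsq : (κ ^ p) ^ 2 ≤ D / x := by
    rw [le_div_iff₀ hx, ← pow_mul, mul_comm p 2, pow_mul]
    rw [inv_pow, ← div_eq_mul_inv, le_div_iff₀ (by positivity)] at hup
    linarith
  have hrpow : x ^ (-(1 : ℝ) / 2) = (√x)⁻¹ := by
    rw [sqrt_eq_rpow, ← rpow_neg hx.le]; norm_num
  rw [hrpow, ← div_eq_mul_inv, ← sqrt_div' _ hx.le]
  exact le_sqrt_of_sq_le hsq

theorem stmt_3 (κ ε : ℝ) (hκ0 : 0 < κ) (hκ1 : κ < 1) (hε : 0 < ε)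
    (t1 : ℕ) (ht1 : 1 ≤ t1)
    (c : ℕ → ℝ)
    (hc : ∀ p : ℕ, 1 ≤ p →
      c p = min (((1 + κ) / (2 * κ)) ^ p) ((p : ℝ) ^ ((1 + ε) / 2)))
    (t : ℕ → ℕ) (h0 : t 0 = 0)
    (hrec : ∀ p : ℕ, 1 ≤ p →
      t p = t (p - 1) + max (Int.toNat ⌈(κ ^ (-2 : ℤ) - 1) * (t (p - 1) : ℝ)⌉) t1) :
    ∃ C : ℝ, 0 < C ∧ ∀ p : ℕ, 2 ≤ p →
      c p * κ ^ p ≤ C * (Real.log (t p)) ^ ((1 + ε) / 2) * (t p : ℝ) ^ (-(1 : ℝ) / 2) := by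
  set K : ℝ := (κ ^ 2)⁻¹
  have hK : 1 < K := one_lt_inv₀ (by positivity) |>.mpr (by nlinarith)
  have hKpow (n : ℕ) : 0 < K ^ n := pow_pos (zero_lt_one.trans hK) n
  have hrec' : ∀ n, t (n + 1) = t n + max ⌈(K - 1) * (t n : ℝ)⌉.toNat t1 := fun n ↦ by
    simpa [K, zpow_neg] using hrec (n + 1) (Nat.le_add_left 1 n)
  have ht1e : t 1 = t1 := by simpa [h0] using hrec' 0
  set D : ℝ := (1 + t1) / (K - 1)
  have hD : 0 < D := div_pos (by positivity) (sub_pos.mpr hK)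
  have hlow (n : ℕ) : K ^ n ≤ t (n + 1) := by
    have hgeom := geom_le (u := fun n ↦ (t (n + 1) : ℝ)) (zero_lt_one.trans hK).le n
      fun k _ ↦ by rw [hrec' (k + 1)]; exact mul_le_add_max_ceil_toNat _ _
    have ht1' : (1 : ℝ) ≤ t1 := by exact_mod_cast ht1
    simp only [zero_add, ht1e] at hgeom
    nlinarith [hKpow n]
  have hup (n : ℕ) : (t n : ℝ) ≤ D * K ^ n := by
    have := add_div_le_geom_of_le_mul_add (u := fun k ↦ (t k : ℝ)) (b := 1 + t1) hK
      (fun k ↦ by rw [hrec' k]; exact add_max_ceil_toNat_le hK.le _ _) n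
    simp only [h0, CharP.cast_eq_zero, zero_add] at this
    nlinarith [hKpow n]
  refine ⟨(2 / log K) ^ ((1 + ε) / 2) * √D, by have := log_pos hK; positivity, fun p hp ↦ ?_⟩
  obtain ⟨n, rfl⟩ : ∃ n, p = n + 1 := ⟨p - 1, by omega⟩
  have hcp : c (n + 1) ≤ ((n + 1 : ℕ) : ℝ) ^ ((1 + ε) / 2) :=
    hc (n + 1) (Nat.le_add_left 1 n) ▸ min_le_right _ _
  calc c (n + 1) * κ ^ (n + 1)
      ≤ ((n + 1 : ℕ) : ℝ) ^ ((1 + ε) / 2) * κ ^ (n + 1) := by gcongr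
    _ ≤ ((2 / log K) ^ ((1 + ε) / 2) * log (t (n + 1)) ^ ((1 + ε) / 2))
          * (√D * (t (n + 1) : ℝ) ^ (-(1 : ℝ) / 2)) := by
        refine mul_le_mul (natCast_rpow_le_mul_log_rpow hK (by linarith) hp (hlow n))
          (pow_le_sqrt_mul_rpow_neg_half hκ0 ((hKpow n).trans_le (hlow n)) _ (hup _))
          (by positivity)
          (mul_nonneg (rpow_nonneg (div_pos two_pos (log_pos hK)).le _)
            (rpow_nonneg (log_nonneg ((one_le_pow₀ hK.le).trans (hlow n))) _))
    _ = _ := by ring
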